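/- For every integer k ≥ 1 and all n, q ≥ 0, L_k^q(n) = Σ_{p ∈ D_k(n)} A_{k, p+q}, and moreover the canonical k-decomposition of L_k^q(n) is the shifted set {p + q : p ∈ D_k(n)}. -/

import Mathlib

/-- Fuel-limited version of Hofstadter's recursion:
`Fa k fuel n` equals `F_k n` whenever `fuel ≥ n`. -/
def Fa (k : ℕ) : ℕ → ℕ → ℕ
  | 0, _ => 0
  | _ + 1, 0 => 0
  | fuel + 1, n + 1 => (n + 1) - (Fa k fuel)^[k] n

/-- Hofstadter's function `F_k` : `F k 0 = 0` and `F k n = n - (F k)^[k] (n-1)`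
for `n ≥ 1` (since `F_k m ≤ m`, the fuel `n` is always sufficient). -/
def F (k : ℕ) (n : ℕ) : ℕ := Fa k n n

/-- The function `L_k n = n + (F k)^[k-1] n`. -/
def L (k : ℕ) (n : ℕ) : ℕ := n + (F k)^[k - 1] n

/-- The Fibonacci-like sequence `A_{k,p}` : `A k p = p+1` for `p < k`,
and `A k p = A k (p-1) + A k (p-k)` for `p ≥ k`.
(The `max k 1` only makes termination evident; in all statements `k ≥ 1`.) -/
def A (k : ℕ) : ℕ → ℕ
  | 0 => 1
  | p + 1 => if p + 1 < k then p + 2 else A k p + A k (p + 1 - max k 1)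
termination_by p => p
decreasing_by all_goals omega

/-- `D` is a canonical `k`-decomposition of `n` : distinct elements are at
distance at least `k`, and the corresponding `A`-numbers sum to `n`. -/
def IsCanonDecomp (k n : ℕ) (D : Finset ℕ) : Prop :=
  (∀ p ∈ D, ∀ q ∈ D, p ≠ q → k ≤ Nat.dist p q) ∧ ∑ p ∈ D, A k p = n


/-! For a canonical decomposition `D` of `n` and `j ≤ k`, one shows
`F_k^j n = ∑_{p ∈ D} A_{k,p-j}` (truncated subtraction) by strong induction on `n`.
For `j = 1` this comes from `F_k (n+1) = n + 1 - F_k^k n`, using the canonical decomposition of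
`n` obtained from that of `n + 1` by replacing its least index `m` with the canonical
decomposition `{m-1, m-1-k, …}` of `A_{k,m} - 1`. For larger `j` one needs a canonical
decomposition of `F_k n`: shifting `D` down by one works unless `D` starts with a run
`0, k, …, tk`, and that run is first merged into the single index `tk + 1`, which leaves every
sum `∑ A_{k,p-j}` with `1 ≤ j ≤ k` unchanged. Then `L_k n = n + F_k^{k-1} n = ∑_{p ∈ D} A_{k,p+1}`
because `A_{k,p+1} = A_{k,p} + A_{k,p+1-k}`, and shifting up preserves canonicity, so iterating
gives the theorem. -/

lemma Set.EqOn.iterate {α : Type*} {f g : α → α} {s : Set α} (h : s.EqOn f g)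
    (hf : s.MapsTo f s) (n : ℕ) : s.EqOn f^[n] g^[n] := by
  induction n with
  | zero => exact fun _ _ => rfl
  | succ n ih =>
    intro x hx
    rw [Function.iterate_succ_apply, Function.iterate_succ_apply, ← h hx]
    exact ih (hf hx)

section HofstadterA

variable {k : ℕ}

lemma A_zero : A k 0 = 1 := by rw [A]

lemma A_of_lt {p : ℕ} (h : p < k) : A k p = p + 1 := by
  cases p with
  | zero => exact A_zero
  | succ p => rw [A, if_pos h]

lemma A_succ (hk : 1 ≤ k) (p : ℕ) : A k (p + 1) = A k p + A k (p + 1 - k) := by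
  rw [A]
  split_ifs with h
  · rw [A_of_lt (by omega), Nat.sub_eq_zero_of_le h.le, A_zero]
  · rw [max_eq_left hk]

lemma A_pos (p : ℕ) : 0 < A k p := by
  induction p with
  | zero => rw [A_zero]; exact one_pos
  | succ p ih => rw [A]; split_ifs <;> omega

lemma A_eq_sub_one_add_sub (hk : 1 ≤ k) {p : ℕ} (hp : p ≠ 0) :
    A k p = A k (p - 1) + A k (p - k) := by
  obtain ⟨p, rfl⟩ := Nat.exists_eq_succ_of_ne_zero hp
  rw [A_succ hk]
  rfl

lemma A_sub_one_lt (hk : 1 ≤ k) {p : ℕ} (hp : p ≠ 0) : A k (p - 1) < A k p := by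
  rw [A_eq_sub_one_add_sub hk hp]
  exact Nat.lt_add_of_pos_right (A_pos _)

lemma A_sub_one_le (hk : 1 ≤ k) (p : ℕ) : A k (p - 1) ≤ A k p := by
  rcases eq_or_ne p 0 with rfl | hp
  · rfl
  · exact (A_sub_one_lt hk hp).le

lemma sum_A_sub_eq_of_sum_A_sub_one_eq (hk : 1 ≤ k) {D : Finset ℕ}
    (h : ∑ p ∈ D, A k (p - 1) = ∑ p ∈ D, A k p) (j : ℕ) :
    ∑ p ∈ D, A k (p - j) = ∑ p ∈ D, A k p := by
  have hzero : ∀ p ∈ D, p = 0 := fun p hp => by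
    by_contra hp0
    exact (A_sub_one_lt hk hp0).ne
      ((Finset.sum_eq_sum_iff_of_le fun q _ => A_sub_one_le hk q).1 h p hp)
  exact Finset.sum_congr rfl fun p hp => by rw [hzero p hp, Nat.zero_sub]

end HofstadterA

section HofstadterF

variable {k : ℕ}

lemma Fa_le (k fuel n : ℕ) : Fa k fuel n ≤ n := by
  cases fuel <;> cases n <;> simp [Fa]

lemma Fa_zero_right (k fuel : ℕ) : Fa k fuel 0 = 0 := by
  cases fuel <;> rfl

lemma Fa_eq_of_le_of_le : ∀ {fuel fuel' n : ℕ}, n ≤ fuel → n ≤ fuel' → Fa k fuel n = Fa k fuel' n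
  | fuel, fuel', 0, _, _ => by rw [Fa_zero_right, Fa_zero_right]
  | 0, _, _ + 1, h, _ | _ + 1, 0, _ + 1, _, h => absurd h (by omega)
  | fuel + 1, fuel' + 1, n + 1, h, h' => by
    have hiter : (Set.Iic n).EqOn (Fa k fuel)^[k] (Fa k fuel')^[k] :=
      Set.EqOn.iterate
        (fun x hx => Fa_eq_of_le_of_le (le_trans hx (by omega)) (le_trans hx (by omega)))
        (fun x hx => (Fa_le k fuel x).trans hx) k
    rw [Fa, Fa, hiter (Set.mem_Iic.2 le_rfl)]

lemma Fa_eq_F {fuel n : ℕ} (h : n ≤ fuel) : Fa k fuel n = F k n := Fa_eq_of_le_of_le h le_rfl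

lemma F_le (k n : ℕ) : F k n ≤ n := Fa_le k n n

lemma F_succ (k n : ℕ) : F k (n + 1) = n + 1 - (F k)^[k] n := by
  have hiter : (Set.Iic n).EqOn (Fa k n)^[k] (F k)^[k] :=
    Set.EqOn.iterate (fun x hx => Fa_eq_F hx) (fun x hx => (Fa_le k n x).trans hx) k
  rw [F, Fa, hiter (Set.mem_Iic.2 le_rfl)]

end HofstadterF

def Spaced (k : ℕ) (D : Finset ℕ) : Prop :=
  (D : Set ℕ).Pairwise fun p q => k ≤ Nat.dist p q

section Spacing

variable {k : ℕ} {S T : Finset ℕ}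

lemma Spaced.subset (hT : Spaced k T) (h : S ⊆ T) : Spaced k S :=
  Set.Pairwise.mono (Finset.coe_subset.2 h) hT

lemma Spaced.union (hS : Spaced k S) (hT : Spaced k T) (h : ∀ p ∈ S, ∀ q ∈ T, p + k ≤ q) :
    Spaced k (S ∪ T) := by
  rw [Spaced, Finset.coe_union, Set.pairwise_union]
  refine ⟨hS, hT, fun p hp q hq _ => ?_⟩
  have := h p hp q hq
  constructor <;> unfold Nat.dist <;> omega

lemma Spaced.insert (hS : Spaced k S) {m : ℕ} (h : ∀ q ∈ S, m + k ≤ q ∨ q + k ≤ m) :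
    Spaced k (insert m S) := by
  rw [Spaced, Finset.coe_insert, Set.pairwise_insert]
  refine ⟨hS, fun q hq _ => ?_⟩
  have := h q hq
  constructor <;> unfold Nat.dist <;> omega

lemma Spaced.image (hS : Spaced k S) {f : ℕ → ℕ}
    (hf : ∀ p ∈ S, ∀ q ∈ S, Nat.dist (f p) (f q) = Nat.dist p q) : Spaced k (S.image f) := by
  rw [Spaced, Finset.coe_image]
  rintro _ ⟨p, hp, rfl⟩ _ ⟨q, hq, rfl⟩ hpq
  rw [hf p hp q hq]
  exact hS hp hq (ne_of_apply_ne f hpq)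

lemma Spaced.add_le_of_lt (hS : Spaced k S) {p q : ℕ} (hp : p ∈ S) (hq : q ∈ S) (h : p < q) :
    p + k ≤ q := by
  have := hS hp hq h.ne
  unfold Nat.dist at this
  omega

end Spacing

def predDecomp (k : ℕ) : ℕ → Finset ℕ
  | 0 => ∅
  | m + 1 => insert m (predDecomp k (m + 1 - max k 1))
termination_by m => m
decreasing_by omega

lemma predDecomp_zero (k : ℕ) : predDecomp k 0 = ∅ := by rw [predDecomp]

section PredDecomp

variable {k : ℕ} (hk : 1 ≤ k)
include hk

lemma predDecomp_succ (m : ℕ) : predDecomp k (m + 1) = insert m (predDecomp k (m + 1 - k)) := by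
  rw [predDecomp, max_eq_left hk]

lemma predDecomp_one : predDecomp k 1 = {0} := by
  rw [predDecomp_succ hk, Nat.sub_eq_zero_of_le hk, predDecomp_zero]
  rfl

lemma lt_of_mem_predDecomp {m p : ℕ} (h : p ∈ predDecomp k m) : p < m := by
  induction m using Nat.strong_induction_on generalizing p with
  | _ m ih =>
    cases m with
    | zero => simp [predDecomp_zero] at h
    | succ m =>
      rw [predDecomp_succ hk, Finset.mem_insert] at h
      rcases h with rfl | h
      · omega
      · have := ih _ (by omega) h
        omega

lemma spaced_predDecomp (m : ℕ) : Spaced k (predDecomp k m) := by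
  induction m using Nat.strong_induction_on with
  | _ m ih =>
    cases m with
    | zero => simp [predDecomp_zero, Spaced]
    | succ m =>
      rw [predDecomp_succ hk]
      exact (ih _ (by omega)).insert fun q hq => by
        have := lt_of_mem_predDecomp hk hq
        omega

lemma sum_predDecomp (m : ℕ) : ∑ p ∈ predDecomp k m, A k p + 1 = A k m := by
  induction m using Nat.strong_induction_on with
  | _ m ih =>
    cases m with
    | zero => simp [predDecomp_zero, A_zero]
    | succ m =>
      have hm : m ∉ predDecomp k (m + 1 - k) := fun h => by
        have := lt_of_mem_predDecomp hk h
        omega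
      rw [predDecomp_succ hk, Finset.sum_insert hm, A_succ hk, add_assoc, ih _ (by omega)]

lemma sum_predDecomp_sub (m : ℕ) :
    ∑ p ∈ predDecomp k m, A k (p - k) + A k (m - 1) = A k m := by
  induction m using Nat.strong_induction_on with
  | _ m ih =>
    cases m with
    | zero => simp [predDecomp_zero]
    | succ m =>
      have hm : m ∉ predDecomp k (m + 1 - k) := fun h => by
        have := lt_of_mem_predDecomp hk h
        omega
      have hrec := ih (m + 1 - k) (by omega)
      rw [show m + 1 - k - 1 = m - k by omega] at hrec
      rw [predDecomp_succ hk, Finset.sum_insert hm, A_succ hk, Nat.add_sub_cancel]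
      omega

lemma mem_predDecomp_mul_add_one {t p : ℕ} :
    p ∈ predDecomp k (t * k + 1) ↔ ∃ i ≤ t, i * k = p := by
  induction t with
  | zero => simp [predDecomp_one hk, eq_comm]
  | succ t ih =>
    rw [predDecomp_succ hk, show (t + 1) * k + 1 - k = t * k + 1 by rw [Nat.succ_mul]; omega,
      Finset.mem_insert, ih]
    constructor
    · rintro (rfl | ⟨i, hi, rfl⟩)
      exacts [⟨t + 1, le_rfl, rfl⟩, ⟨i, by omega, rfl⟩]
    · rintro ⟨i, hi, rfl⟩
      rcases Nat.of_le_succ hi with hi | rfl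
      exacts [Or.inr ⟨i, hi, rfl⟩, Or.inl rfl]

lemma sum_predDecomp_mul_add_one {j : ℕ} (hj : 1 ≤ j) (hjk : j ≤ k) (t : ℕ) :
    ∑ p ∈ predDecomp k (t * k + 1), A k (p - j) = A k (t * k + 1 - j) := by
  induction t with
  | zero => simp [predDecomp_one hk, Nat.sub_eq_zero_of_le hj]
  | succ t ih =>
    have hm : (t + 1) * k ∉ predDecomp k (t * k + 1) := fun h => by
      have := lt_of_mem_predDecomp hk h
      rw [Nat.succ_mul] at this
      omega
    have hrec := A_succ hk ((t + 1) * k - j)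
    rw [Nat.succ_mul] at hm hrec ⊢
    rw [show t * k + k - j + 1 = t * k + k + 1 - j by omega,
      show t * k + k + 1 - j - k = t * k + 1 - j by omega] at hrec
    rw [predDecomp_succ hk, show t * k + k + 1 - k = t * k + 1 by omega, Finset.sum_insert hm,
      ih, hrec, add_comm]

end PredDecomp

section Decompositions

variable {k : ℕ} (hk : 1 ≤ k)
include hk

lemma exists_isCanonDecomp_pred {n : ℕ} {D : Finset ℕ} (hD : IsCanonDecomp k (n + 1) D) :
    ∃ D', IsCanonDecomp k n D' ∧ ∑ p ∈ D', A k (p - k) + ∑ p ∈ D, A k (p - 1) = n + 1 := by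
  have hspaced : Spaced k D := hD.1
  have hsum := hD.2
  have hne : D.Nonempty := Finset.nonempty_iff_ne_empty.2 (by rintro rfl; simp at hsum)
  set m := D.min' hne
  have hmD : m ∈ D := D.min'_mem hne
  have hrest : ∀ p ∈ D.erase m, m + k ≤ p := fun p hp =>
    hspaced.add_le_of_lt hmD (Finset.mem_of_mem_erase hp)
      (lt_of_le_of_ne (D.min'_le p (Finset.mem_of_mem_erase hp)) (Finset.ne_of_mem_erase hp).symm)
  have hsplit : ∀ f : ℕ → ℕ, ∑ p ∈ D, f p = f m + ∑ p ∈ D.erase m, f p := fun f =>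
    (Finset.add_sum_erase D f hmD).symm
  have hlow : ∀ p ∈ predDecomp k m, ∀ q ∈ D.erase m, p + k ≤ q := fun p hp q hq => by
    have := lt_of_mem_predDecomp hk hp
    have := hrest q hq
    omega
  have hdisj : Disjoint (predDecomp k m) (D.erase m) :=
    Finset.disjoint_left.2 fun p hp hp' => by have := hlow p hp p hp'; omega
  have hrest_sum : ∑ p ∈ D.erase m, A k (p - k) + ∑ p ∈ D.erase m, A k (p - 1)
      = ∑ p ∈ D.erase m, A k p := by
    rw [← Finset.sum_add_distrib]
    exact Finset.sum_congr rfl fun p hp => by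
      rw [add_comm, ← A_eq_sub_one_add_sub hk (by have := hrest p hp; omega)]
  refine ⟨predDecomp k m ∪ D.erase m, ⟨(spaced_predDecomp hk m).union
    (hspaced.subset (D.erase_subset m)) hlow, ?_⟩, ?_⟩
  · have := sum_predDecomp hk m
    rw [Finset.sum_union hdisj]
    rw [hsplit] at hsum
    omega
  · have := sum_predDecomp_sub hk m
    rw [Finset.sum_union hdisj, hsplit, ← hsum, hsplit]
    omega

lemma exists_predDecomp_subset {D : Finset ℕ} (hD : Spaced k D) (h0 : 0 ∈ D) :
    ∃ t, predDecomp k (t * k + 1) ⊆ D ∧ ∀ p ∈ D \ predDecomp k (t * k + 1), t * k + 1 + k ≤ p := by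
  have hex : ∃ t, (t + 1) * k ∉ D := ⟨D.sup id, fun h => by
    have := D.le_sup (f := id) h
    simp only [id] at this
    nlinarith⟩
  set t := Nat.find hex
  have hrun : ∀ i ≤ t, i * k ∈ D := by
    rintro (_ | i) hi
    · simpa using h0
    · exact not_not.1 (Nat.find_min hex (by omega : i < t))
  have hbound : ∀ s ≤ t, ∀ p ∈ D, (∀ i ≤ s, i * k ≠ p) → s * k + k ≤ p := by
    intro s
    induction s with
    | zero =>
      intro _ p hp hne
      have := hne 0 le_rfl
      simpa using hD.add_le_of_lt (hrun 0 (Nat.zero_le _)) hp (by omega)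
    | succ s ih =>
      intro hs p hp hne
      have h1 := ih (by omega) p hp fun i hi => hne i (by omega)
      have h2 := hne (s + 1) le_rfl
      have h3 := hD.add_le_of_lt (hrun (s + 1) hs) hp (by rw [Nat.succ_mul] at h2 ⊢; omega)
      rwa [Nat.succ_mul] at h3 ⊢
  refine ⟨t, fun p hp => ?_, fun p hp => ?_⟩
  · obtain ⟨i, hi, rfl⟩ := (mem_predDecomp_mul_add_one hk).1 hp
    exact hrun i hi
  · rw [Finset.mem_sdiff, mem_predDecomp_mul_add_one hk] at hp
    push Not at hp
    have h1 := hbound t le_rfl p hp.1 hp.2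
    have h2 : (t + 1) * k ≠ p := fun h => Nat.find_spec hex (h ▸ hp.1)
    rw [Nat.succ_mul] at h2
    omega

lemma exists_spaced_zero_notMem {D : Finset ℕ} (hD : Spaced k D) :
    ∃ D', Spaced k D' ∧ 0 ∉ D' ∧
      ∀ j, 1 ≤ j → j ≤ k → ∑ p ∈ D', A k (p - j) = ∑ p ∈ D, A k (p - j) := by
  by_cases h0 : 0 ∈ D
  · obtain ⟨t, hsub, hhigh⟩ := exists_predDecomp_subset hk hD h0
    have hm : t * k + 1 ∉ D \ predDecomp k (t * k + 1) := fun h => by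
      have := hhigh _ h
      omega
    refine ⟨insert (t * k + 1) (D \ predDecomp k (t * k + 1)),
      (hD.subset Finset.sdiff_subset).insert fun q hq => Or.inl (hhigh q hq), ?_,
      fun j hj hjk => ?_⟩
    · rw [Finset.mem_insert]
      rintro (h | h)
      · omega
      · have := hhigh 0 h
        omega
    · rw [Finset.sum_insert hm, ← sum_predDecomp_mul_add_one hk hj hjk t,
        ← Finset.sum_union Finset.disjoint_sdiff, Finset.union_sdiff_of_subset hsub]
  · exact ⟨D, hD, h0, fun _ _ _ => rfl⟩

lemma exists_spaced_sum_sub_eq {D : Finset ℕ} (hD : Spaced k D) :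
    ∃ E, Spaced k E ∧ ∀ i < k, ∑ p ∈ E, A k (p - i) = ∑ p ∈ D, A k (p - (i + 1)) := by
  obtain ⟨D', hD', h0, hsum⟩ := exists_spaced_zero_notMem hk hD
  have hpos : ∀ p ∈ D', 1 ≤ p := fun p hp =>
    Nat.one_le_iff_ne_zero.2 (ne_of_mem_of_not_mem hp h0)
  refine ⟨D'.image (· - 1), hD'.image fun p hp q hq => ?_, fun i hi => ?_⟩
  · have := hpos p hp
    have := hpos q hq
    unfold Nat.dist
    omega
  · rw [Finset.sum_image fun p hp q hq (h : p - 1 = q - 1) => by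
      have := hpos p hp
      have := hpos q hq
      omega, ← hsum (i + 1) (by omega) (by omega)]
    exact Finset.sum_congr rfl fun p _ => by rw [Nat.sub_sub, add_comm 1 i]

end Decompositions

section Main

variable {k : ℕ} (hk : 1 ≤ k)
include hk

lemma F_succ_eq_sum {n : ℕ} {D : Finset ℕ} (hD : IsCanonDecomp k (n + 1) D)
    (hpred : ∀ D', IsCanonDecomp k n D' → (F k)^[k] n = ∑ p ∈ D', A k (p - k)) :
    F k (n + 1) = ∑ p ∈ D, A k (p - 1) := by
  obtain ⟨D', hD', hsum⟩ := exists_isCanonDecomp_pred hk hD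
  rw [F_succ, hpred D' hD']
  omega

theorem iterate_F_eq_sum (n : ℕ) :
    ∀ j ≤ k, ∀ D, IsCanonDecomp k n D → (F k)^[j] n = ∑ p ∈ D, A k (p - j) := by
  induction n using Nat.strong_induction_on with
  | _ n ih =>
  intro j hj D hD
  have hF : F k n = ∑ p ∈ D, A k (p - 1) := by
    cases n with
    | zero =>
      have := Finset.sum_le_sum fun p (_ : p ∈ D) => A_sub_one_le hk p
      exact (Nat.eq_zero_of_le_zero (this.trans hD.2.le)).symm
    | succ n => exact F_succ_eq_sum hk hD (ih n n.lt_succ_self k le_rfl)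
  cases j with
  | zero => exact hD.2.symm
  | succ j =>
    rw [Function.iterate_succ_apply]
    rcases (F_le k n).lt_or_eq with hlt | heq
    · obtain ⟨E, hE, hEsum⟩ := exists_spaced_sum_sub_eq hk hD.1
      rw [← hEsum j (by omega)]
      exact ih _ hlt j (by omega) E ⟨hE, by rw [hF]; simpa using hEsum 0 (by omega)⟩
    · -- `F k n = n` forces `D ⊆ {0}`, where shifting indices down changes nothing.
      rw [heq, Function.iterate_fixed heq, sum_A_sub_eq_of_sum_A_sub_one_eq hk
        (hF.symm.trans (heq.trans hD.2.symm)), hD.2]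

lemma L_eq_sum {n : ℕ} {D : Finset ℕ} (hD : IsCanonDecomp k n D) :
    L k n = ∑ p ∈ D, A k (p + 1) := by
  rw [L, iterate_F_eq_sum hk n (k - 1) (by omega) D hD, ← hD.2, ← Finset.sum_add_distrib]
  exact Finset.sum_congr rfl fun p _ => by rw [A_succ hk, show p + 1 - k = p - (k - 1) by omega]

lemma isCanonDecomp_iterate_L {n : ℕ} {D : Finset ℕ} (hD : IsCanonDecomp k n D) (q : ℕ) :
    IsCanonDecomp k ((L k)^[q] n) (D.image (· + q)) := by
  induction q with
  | zero => simpa using hD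
  | succ q ih =>
    have hspaced : Spaced k (D.image (· + q)) := ih.1
    have himage : (D.image (· + q)).image (· + 1) = D.image (· + (q + 1)) := by
      rw [Finset.image_image]
      rfl
    rw [Function.iterate_succ_apply', L_eq_sum hk ih, ← himage]
    refine ⟨hspaced.image fun p _ q _ => Nat.dist_add_add_right p 1 q, ?_⟩
    rw [Finset.sum_image fun _ _ _ _ => Nat.add_right_cancel]

end Main

/-- `L_k^q n = Σ_{p ∈ D_k(n)} A_{k, p+q}`, and the canonical
`k`-decomposition of `L_k^q n` is `{p + q : p ∈ D_k(n)}`. -/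
theorem L_iterate_eq_shifted_decomp (k : ℕ) (hk : 1 ≤ k) (n q : ℕ)
    (D : Finset ℕ) (hD : IsCanonDecomp k n D) :
    (L k)^[q] n = ∑ p ∈ D, A k (p + q) ∧
    IsCanonDecomp k ((L k)^[q] n) (D.image (· + q)) := by
  have h := isCanonDecomp_iterate_L hk hD q
  refine ⟨?_, h⟩
  rw [← h.2, Finset.sum_image fun _ _ _ _ => Nat.add_right_cancel]
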